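/- Let X be a completely metrizable topological space and let E be a nonempty subset of X. Then E is an H₁-retract of X if and only if E is a Gδ-set in X. -/

import Mathlib

/-- A set is an Fσ-set if it is a countable union of closed sets. -/
def IsFsigma {X : Type*} [TopologicalSpace X] (A : Set X) : Prop :=
  ∃ F : ℕ → Set X, (∀ n, IsClosed (F n)) ∧ A = ⋃ n, F n

/-- A mapping is of the first Lebesgue class if the preimage of every open set is Fσ. -/
def LebesgueClassOne {X Y : Type*} [TopologicalSpace X] [TopologicalSpace Y] (g : X → Y) : Prop :=
  ∀ V : Set Y, IsOpen V → IsFsigma (g ⁻¹' V)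

/-- `E` is an H₁-retract of `X` if there is a first Lebesgue class map `r : X → E`
fixing the points of `E`. -/
def IsH1Retract {X : Type*} [TopologicalSpace X] (E : Set X) : Prop :=
  ∃ r : X → E, (∀ x : E, r x = x) ∧ LebesgueClassOne r
/-- A topological space is completely metrizable if its topology is induced by some
complete metric. -/
def CompletelyMetrizable (X : Type*) [t : TopologicalSpace X] : Prop :=
  ∃ m : MetricSpace X, m.toUniformSpace.toTopologicalSpace = t ∧ @CompleteSpace X m.toUniformSpace

/-!
`Gδ ⇒ H₁-retract`. Write `E = ⋂ Gₙ` with `Gₙ` open. Using a well-order of `X`, cut each layer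
`(⋂_{m<n} Gₘ) \ Gₙ` of the complement into the cells `ball x (1/(n+1)) \ ⋃_{y<x} ball y (1/(n+1))`
and send each cell to a point of `E` nearly nearest to its centre `x`. Points close to `E` lie in
deep layers, whose cells are small, so the retraction is continuous at every point of `E`; and by
Montgomery's lemma every union of cells of one layer is Fσ.

`H₁-retract ⇒ Gδ`. It suffices to put each `{z | ε ≤ dist z (r z)}` into an Fσ-set disjoint
from `E`. Such a separation can be localised: if every nonempty closed set `F` has a nonempty
relatively open piece that is separated, then, by Montgomery's lemma, so is the union `W` of all
separated open sets, and `Wᶜ` has to be empty. Locally, pull back along `r` a σ-disjoint open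
cover of `E` by sets of diameter `< ε` (A. H. Stone). All subunions of the pulled back families
are Fσ, and a disjoint family with this property cannot consist of meagre sets (this is where
completeness enters, through Baire category). Hence on some relatively open piece of `F` the map
`r` takes values in one small set, which separates the piece from `E`.
-/

open Set Metric Filter Topology Function

theorem existsUnique_mem_diff_iUnion_lt {ι α : Type*} [LinearOrder ι] [WellFoundedLT ι]
    {O : ι → Set α} {z : α} (h : ∃ i, z ∈ O i) : ∃! i, z ∈ O i \ ⋃ j < i, O j := by
  refine ⟨wellFounded_lt.min {i | z ∈ O i} h, ⟨wellFounded_lt.min_mem _ h, fun hz => ?_⟩, ?_⟩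
  · obtain ⟨j, hj, hzj⟩ := mem_iUnion₂.1 hz
    exact wellFounded_lt.not_lt_min {i | z ∈ O i} hzj hj
  · rintro i ⟨hzi, hz⟩
    refine le_antisymm (not_lt.1 fun hlt => hz (mem_biUnion hlt (wellFounded_lt.min_mem _ h))) ?_
    exact not_lt.1 (wellFounded_lt.not_lt_min {i | z ∈ O i} hzi)

section Fsigma

variable {X : Type*} [TopologicalSpace X]

theorem isFsigma_iff_isGδ_compl {A : Set X} : IsFsigma A ↔ IsGδ Aᶜ := by
  constructor
  · rintro ⟨F, hF, rfl⟩
    rw [compl_iUnion]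
    exact .iInter_of_isOpen fun n => (hF n).isOpen_compl
  · intro h
    obtain ⟨G, hG, hAG⟩ := isGδ_iff_eq_iInter_nat.1 h
    refine ⟨fun n => (G n)ᶜ, fun n => (hG n).isClosed_compl, ?_⟩
    rw [← compl_iInter, ← hAG, compl_compl]

theorem IsClosed.isFsigma {A : Set X} (hA : IsClosed A) : IsFsigma A :=
  ⟨fun _ => A, fun _ => hA, (iUnion_const A).symm⟩

theorem IsFsigma.iUnion {ι : Sort*} [Countable ι] {A : ι → Set X} (hA : ∀ i, IsFsigma (A i)) :
    IsFsigma (⋃ i, A i) := by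
  simp only [isFsigma_iff_isGδ_compl, compl_iUnion] at hA ⊢
  exact .iInter hA

theorem IsFsigma.union {A B : Set X} (hA : IsFsigma A) (hB : IsFsigma B) : IsFsigma (A ∪ B) := by
  rw [isFsigma_iff_isGδ_compl, compl_union] at *
  exact hA.inter hB

theorem IsFsigma.inter {A B : Set X} (hA : IsFsigma A) (hB : IsFsigma B) : IsFsigma (A ∩ B) := by
  rw [isFsigma_iff_isGδ_compl, compl_inter] at *
  exact hA.union hB

theorem IsFsigma.preimage {Y : Type*} [TopologicalSpace Y] {f : Y → X} (hf : Continuous f)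
    {A : Set X} (hA : IsFsigma A) : IsFsigma (f ⁻¹' A) := by
  rw [isFsigma_iff_isGδ_compl, ← preimage_compl] at *
  exact hA.preimage hf

theorem IsOpen.isFsigma [PerfectlyNormalSpace X] {A : Set X} (hA : IsOpen A) : IsFsigma A := by
  rw [isFsigma_iff_isGδ_compl]
  exact hA.isClosed_compl.isGδ

theorem isFsigma_preimage_sdiff_of_forall_mem {ι κ Y : Type*} [Countable ι] {f : X → Y}
    {E : Set X} {P : ι → κ → Set X} {q : ι → κ → Y}
    (hP : ∀ i (S : Set κ), IsFsigma (⋃ k ∈ S, P i k))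
    (hcover : Eᶜ ⊆ ⋃ i, ⋃ k, P i k) (hf : ∀ i k, ∀ z ∈ P i k, z ∉ E ∧ f z = q i k) (V : Set Y) :
    IsFsigma (f ⁻¹' V \ E) := by
  have : f ⁻¹' V \ E = ⋃ i, ⋃ k ∈ {k | q i k ∈ V}, P i k := by
    ext z
    simp only [Set.mem_sdiff, mem_preimage, mem_iUnion, exists_prop, mem_ofPred_eq]
    constructor
    · rintro ⟨hzV, hz⟩
      obtain ⟨i, k, hzk⟩ := mem_iUnion₂.1 (hcover hz)
      exact ⟨i, k, (hf i k z hzk).2 ▸ hzV, hzk⟩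
    · rintro ⟨i, k, hkV, hz⟩
      exact ⟨by rw [(hf i k z hz).2]; exact hkV, (hf i k z hz).1⟩
  rw [this]
  exact .iUnion fun i => hP i _

end Fsigma

section Montgomery

variable {X : Type*} [MetricSpace X]

theorem isClosed_iUnion_of_le_dist {ι : Type*} {F : ι → Set X} {δ : ℝ} (hδ : 0 < δ)
    (hF : ∀ i, IsClosed (F i))
    (hsep : ∀ i j, i ≠ j → ∀ x ∈ F i, ∀ y ∈ F j, δ ≤ dist x y) : IsClosed (⋃ i, F i) := by
  refine LocallyFinite.isClosed_iUnion (fun z => ⟨ball z (δ / 2), ball_mem_nhds z (by positivity),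
    Subsingleton.finite fun i ⟨x, hxi, hx⟩ j ⟨y, hyj, hy⟩ => ?_⟩) hF
  by_contra hij
  have := hsep i j hij x hxi y hyj
  have := dist_triangle_right x y z
  rw [mem_ball] at hx hy
  linarith

theorem IsOpen.iUnion_compl_thickening_compl {O : Set X} (hO : IsOpen O) :
    ⋃ m : ℕ, (thickening (1 / (m + 1)) Oᶜ)ᶜ = O := by
  ext z
  simp only [mem_iUnion, mem_compl_iff, mem_thickening_iff, not_exists, not_and, not_lt]
  constructor
  · rintro ⟨m, hm⟩
    by_contra hz
    exact absurd (hm z hz) (by simp; positivity)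
  · intro hz
    obtain ⟨ε, hε, hball⟩ := Metric.isOpen_iff.1 hO z hz
    obtain ⟨m, hm⟩ := exists_nat_one_div_lt hε
    exact ⟨m, fun y hy => by_contra fun h => hy (hball (mem_ball'.2 ((not_le.1 h).trans hm)))⟩

/-- Montgomery's lemma. -/
theorem isFsigma_iUnion_inter_diff_iUnion_lt {ι : Type*} [LinearOrder ι] {C O : ι → Set X}
    (hC : ∀ i, IsClosed (C i)) (hO : ∀ i, IsOpen (O i)) :
    IsFsigma (⋃ i, C i ∩ (O i \ ⋃ j < i, O j)) := by
  set D : ℕ → ι → Set X := fun m i =>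
    C i ∩ ((thickening (1 / (m + 1)) (O i)ᶜ)ᶜ \ ⋃ j < i, O j)
  have hD : ∀ i, C i ∩ (O i \ ⋃ j < i, O j) = ⋃ m, D m i := fun i => by
    simp only [D, ← inter_iUnion, ← iUnion_sdiff, (hO i).iUnion_compl_thickening_compl]
  refine ⟨fun m => ⋃ i, D m i, fun m => isClosed_iUnion_of_le_dist (δ := 1 / (m + 1))
    (by positivity) (fun i => (hC i).inter ((isOpen_thickening.isClosed_compl).sdiff
      (isOpen_biUnion fun j _ => hO j))) ?_, by rw [iUnion_comm]; exact iUnion_congr hD⟩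
  intro i j hij x hx y hy
  wlog hlt : i < j generalizing i j x y
  · rw [dist_comm]; exact this j i hij.symm y hy x hx (lt_of_le_of_ne (not_lt.1 hlt) hij.symm)
  -- the later piece `D m j` lies outside `O i`, the earlier one at distance `1 / (m + 1)` inside
  exact not_lt.1 fun h => hx.2.1 (mem_thickening_iff.2
    ⟨y, fun hyO => hy.2.2 (mem_biUnion hlt hyO), h⟩)

end Montgomery

section RetractionOfGδ

variable {X : Type*} [MetricSpace X] {E : Set X}

theorem lebesgueClassOne_of_continuousAt {Y : Type*} [TopologicalSpace Y] {f : X → Y}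
    (hcont : ∀ x ∈ E, ContinuousAt f x) (hoff : ∀ V, IsOpen V → IsFsigma (f ⁻¹' V \ E)) :
    LebesgueClassOne f := by
  intro V hV
  have : f ⁻¹' V = interior (f ⁻¹' V) ∪ (f ⁻¹' V \ E) := by
    refine subset_antisymm (fun z hz => ?_) (union_subset interior_subset sdiff_subset)
    by_cases hzE : z ∈ E
    · exact Or.inl (mem_interior_iff_mem_nhds.2 (hcont z hzE (hV.mem_nhds hz)))
    · exact Or.inr ⟨hz, hzE⟩
  rw [this]
  exact isOpen_interior.isFsigma.union (hoff V hV)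

theorem dist_le_three_mul_of_dist_lt_infDist_add {E : Set X} {x y z w : X} {ρ : ℝ}
    (hzy : dist z y < ρ) (hyw : dist y w < infDist y E + ρ) (hx : x ∈ E) :
    dist w x ≤ 3 * (ρ + dist z x) := by
  have := infDist_le_dist_of_mem (x := y) hx
  have := dist_triangle y z x
  have := dist_triangle_left w x y
  rw [dist_comm] at hzy
  linarith [dist_nonneg (x := z) (y := x)]

theorem continuousAt_of_forall_dist_le {r : X → E} (hfix : ∀ x : E, r x = x) {s : X → ℝ}
    (hs : ∀ x ∈ E, ∀ δ > 0, ∀ᶠ z in 𝓝 x, z ∉ E → s z < δ)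
    (hdist : ∀ z ∉ E, ∀ x ∈ E, dist (r z : X) x ≤ 3 * (s z + dist z x)) {x : X} (hx : x ∈ E) :
    ContinuousAt r x := by
  refine Metric.tendsto_nhds.2 fun ε hε => ?_
  filter_upwards [hs x hx (ε / 6) (by positivity), ball_mem_nhds x (by positivity : 0 < ε / 6)]
    with z hsz hzx
  rw [mem_ball] at hzx
  rw [Subtype.dist_eq, show r x = ⟨x, hx⟩ from hfix ⟨x, hx⟩]
  by_cases hz : z ∈ E
  · rw [show r z = ⟨z, hz⟩ from hfix ⟨z, hz⟩]
    linarith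
  · linarith [hdist z hz x hx, hsz hz]

theorem exists_partition_compl_iInter {G : ℕ → Set X} (hG : ∀ n, IsOpen (G n)) :
    ∃ P : ℕ → X → Set X, (∀ n (S : Set X), IsFsigma (⋃ x ∈ S, P n x)) ∧
      (∀ n x, P n x ⊆ ball x (1 / (n + 1)) \ G n) ∧
      ∀ z ∉ ⋂ n, G n, ∃! i : ℕ × X, z ∈ P i.1 i.2 := by
  obtain ⟨_, _⟩ := exists_wellFoundedLT X
  set L : ℕ → Set X := fun n => (G n)ᶜ \ ⋃ m < n, (G m)ᶜ
  set Q : ℕ → X → Set X := fun n x => ball x (1 / (n + 1)) \ ⋃ y < x, ball y (1 / (n + 1))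
  refine ⟨fun n x => L n ∩ Q n x, fun n S => ?_, fun n x z hz => ⟨hz.2.1, hz.1.1⟩,
    fun z hz => ?_⟩
  · have hL : IsFsigma (L n) := (hG n).isClosed_compl.isFsigma.inter
      ((finite_lt_nat n).isClosed_biUnion fun m _ => (hG m).isClosed_compl).isOpen_compl.isFsigma
    have : ⋃ x ∈ S, L n ∩ Q n x = L n ∩ ⋃ x, {_z | x ∈ S} ∩ Q n x := by ext; simp
    rw [this]
    exact hL.inter
      (isFsigma_iUnion_inter_diff_iUnion_lt (fun _ => isClosed_const) fun _ => isOpen_ball)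
  · obtain ⟨n, hn, hnu⟩ := existsUnique_mem_diff_iUnion_lt (O := fun n => (G n)ᶜ)
      (by simpa using hz)
    obtain ⟨x, hx, hxu⟩ := existsUnique_mem_diff_iUnion_lt (O := fun x => ball x (1 / (n + 1)))
      ⟨z, mem_ball_self (by positivity)⟩
    refine ⟨(n, x), ⟨hn, hx⟩, fun i hi => ?_⟩
    obtain rfl := hnu i.1 hi.1
    exact Prod.ext rfl (hxu i.2 hi.2)

theorem IsGδ.isH1Retract (hE : IsGδ E) (hne : E.Nonempty) : IsH1Retract E := by
  classical
  obtain ⟨G, hG, hEG⟩ := isGδ_iff_eq_iInter_nat.1 hE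
  obtain ⟨P, hPF, hPsub, hPu⟩ := exists_partition_compl_iInter hG
  rw [← hEG] at hPu
  choose! idx hidx hidxu using hPu
  choose p hp using fun (n : ℕ) x =>
    let ⟨y, hyE, hy⟩ := (infDist_lt_iff hne).1
      (lt_add_of_pos_right (infDist x E) (by positivity : (0 : ℝ) < 1 / (n + 1)))
    (⟨⟨y, hyE⟩, hy⟩ : ∃ y : E, dist x y < infDist x E + 1 / (n + 1))
  set r : X → E := fun z => if hz : z ∈ E then ⟨z, hz⟩ else p (idx z).1 (idx z).2
  have hfix : ∀ x : E, r x = x := fun x => dif_pos x.2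
  have hr : ∀ n x, ∀ z ∈ P n x, z ∉ E ∧ r z = p n x := fun n x z hz => by
    have hzE : z ∉ E := fun h => (hPsub n x hz).2 ((hEG ▸ iInter_subset G n) h)
    exact ⟨hzE, by rw [show r z = _ from dif_neg hzE, ← hidxu z hzE (n, x) hz]⟩
  have hs : ∀ x ∈ E, ∀ δ > 0, ∀ᶠ z in 𝓝 x, z ∉ E → 1 / ((idx z).1 + 1 : ℝ) < δ := by
    intro x hx δ hδ
    obtain ⟨n₀, hn₀⟩ := exists_nat_one_div_lt hδ
    filter_upwards [(biInter_mem (finite_lt_nat n₀)).2 fun m _ => (hG m).mem_nhds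
      ((hEG ▸ iInter_subset G m) hx)] with z hzG hz
    have : n₀ ≤ (idx z).1 := not_lt.1 fun h => (hPsub _ _ (hidx z hz)).2 (mem_iInter₂.1 hzG _ h)
    exact lt_of_le_of_lt (one_div_le_one_div_of_le (by positivity) (by simpa)) hn₀
  have hdist : ∀ z ∉ E, ∀ x ∈ E, dist (r z : X) x ≤ 3 * (1 / ((idx z).1 + 1 : ℝ) + dist z x) :=
    fun z hz x hx => by
      rw [(hr _ _ z (hidx z hz)).2]
      exact dist_le_three_mul_of_dist_lt_infDist_add (hPsub _ _ (hidx z hz)).1 (hp _ _) hx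
  exact ⟨r, hfix, lebesgueClassOne_of_continuousAt
    (fun x hx => continuousAt_of_forall_dist_le hfix hs hdist hx) fun V _ =>
      isFsigma_preimage_sdiff_of_forall_mem hPF (fun z hz => mem_iUnion₂.2 ⟨_, _, hidx z hz⟩) hr V⟩

end RetractionOfGδ

section Baire

variable {X : Type*} [MetricSpace X] [CompleteSpace X]

theorem IsClosed.exists_isOpen_inter_subset {T U : Set X} (hT : IsClosed T) (hU : IsOpen U)
    (hne : (U ∩ T).Nonempty) {ι : Type*} [Countable ι] {K : ι → Set X} (hK : ∀ i, IsClosed (K i))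
    (hcover : U ∩ T ⊆ ⋃ i, K i) : ∃ i V, IsOpen V ∧ (V ∩ T).Nonempty ∧ V ∩ T ⊆ K i := by
  by_contra! h
  have : CompleteSpace T := hT.completeSpace_coe
  have hdense : ∀ i, Dense (((↑) : T → X) ⁻¹' (K i)ᶜ) := by
    refine fun i => dense_iff_inter_open.2 fun W hW ⟨w, hw⟩ => ?_
    obtain ⟨V, hV, rfl⟩ := isOpen_induced_iff.1 hW
    obtain ⟨z, ⟨hzV, hzT⟩, hzK⟩ := not_subset.1 (h i V hV ⟨w, hw, w.2⟩)
    exact ⟨⟨z, hzT⟩, hzV, hzK⟩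
  obtain ⟨z, hzU, hzK⟩ := (dense_iInter_of_isOpen
    (fun i => (hK i).isOpen_compl.preimage continuous_subtype_val) hdense).inter_open_nonempty
    _ (hU.preimage continuous_subtype_val) (let ⟨z, hzU, hzT⟩ := hne; ⟨⟨z, hzT⟩, hzU⟩)
  obtain ⟨i, hi⟩ := mem_iUnion.1 (hcover ⟨hzU, z.2⟩)
  exact mem_iInter.1 hzK i hi

theorem IsClosed.exists_isOpen_inter_subset_of_isFsigma {T U : Set X} (hT : IsClosed T)
    (hU : IsOpen U) (hne : (U ∩ T).Nonempty) {ι : Type*} [Countable ι] {S : ι → Set X}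
    (hS : ∀ i, IsFsigma (S i)) (hcover : U ∩ T ⊆ ⋃ i, S i) :
    ∃ i V, IsOpen V ∧ (V ∩ T).Nonempty ∧ V ∩ T ⊆ S i := by
  choose K hK hKS using hS
  obtain ⟨⟨i, k⟩, V, hV, hVne, hVK⟩ := hT.exists_isOpen_inter_subset hU hne
    (K := fun ik : ι × ℕ => K ik.1 ik.2) (fun _ => hK _ _)
    (by simpa only [hKS, iUnion_prod'] using hcover)
  exact ⟨i, V, hV, hVne, hVK.trans (hKS i ▸ subset_iUnion (K i) k)⟩

theorem IsClosed.not_subset_union_of_subset_closure_diff {Z S₁ S₂ : Set X} (hZ : IsClosed Z)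
    (hne : Z.Nonempty) (hS₁ : IsFsigma S₁) (hS₂ : IsFsigma S₂) (hd₁ : Z ⊆ closure (Z \ S₁))
    (hd₂ : Z ⊆ closure (Z \ S₂)) : ¬ Z ⊆ S₁ ∪ S₂ := by
  intro hsub
  have hd : ∀ b, Z ⊆ closure (Z \ cond b S₁ S₂) := Bool.forall_bool.2 ⟨hd₂, hd₁⟩
  obtain ⟨b, V, hV, ⟨w, hwV, hwZ⟩, hVZ⟩ := hZ.exists_isOpen_inter_subset_of_isFsigma isOpen_univ
    (by simpa using hne) (S := fun b => cond b S₁ S₂) (Bool.forall_bool.2 ⟨hS₂, hS₁⟩)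
    (by simpa [union_eq_iUnion] using hsub)
  obtain ⟨y, hyV, hyZ, hyS⟩ := mem_closure_iff.1 (hd b hwZ) V hV hwV
  exact hyS (hVZ ⟨hyV, hyZ⟩)

end Baire

theorem exists_seq_of_forall_fin_exists {α : Type*} {R : ∀ n, (Fin n → α) → α → Prop}
    (h : ∀ n f, ∃ x, R n f x) : ∃ p : ℕ → α, ∀ n, R n (fun m => p m) (p n) := by
  choose next hnext using h
  set p : ℕ → α := Nat.strongRec fun n rec => next n fun m => rec m m.2
  have hp : ∀ n, p n = next n fun m => p m := Nat.strongRec_eq _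
  exact ⟨p, fun n => hp n ▸ hnext _ _⟩

section Kuratowski

variable {Y : Type*} [MetricSpace Y]

theorem exists_seq_rel_and_subset_closure_even_odd [Nonempty Y] {R : Y → Y → Prop}
    (h : ∀ (s : Finset Y) (U : Set Y), IsOpen U → U.Nonempty → ∃ q ∈ U, ∀ x ∈ s, R x q) :
    ∃ p : ℕ → Y, (∀ m n, m < n → R (p m) (p n)) ∧
      range p ⊆ closure (range fun k => p (2 * k)) ∧
      range p ⊆ closure (range fun k => p (2 * k + 1)) := by
  classical
  -- the `n`-th point is chosen close to the `tg n`-th one; every `t` is targeted infinitely often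
  -- from both even and odd positions
  set tg : ℕ → ℕ := fun n => (n / 2).unpair.1
  have step : ∀ n (f : Fin n → Y), ∃ q, (∀ m, R (f m) q) ∧
      ∀ m : Fin n, (m : ℕ) = tg n → dist q (f m) < 1 / (n + 1) := by
    intro n f
    by_cases hn : tg n < n
    · obtain ⟨q, hqU, hq⟩ := h (Finset.univ.image f) (ball (f ⟨tg n, hn⟩) (1 / (n + 1)))
        isOpen_ball ⟨_, mem_ball_self (by positivity)⟩
      exact ⟨q, fun m => hq _ (Finset.mem_image_of_mem f (Finset.mem_univ m)),
        fun m hm => (Fin.ext hm : m = ⟨tg n, hn⟩) ▸ hqU⟩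
    · obtain ⟨q, -, hq⟩ := h (Finset.univ.image f) univ isOpen_univ univ_nonempty
      exact ⟨q, fun m => hq _ (Finset.mem_image_of_mem f (Finset.mem_univ m)),
        fun m hm => absurd (hm ▸ m.2) hn⟩
  obtain ⟨p, hp⟩ := exists_seq_of_forall_fin_exists step
  have hnear : ∀ b t k, b < 2 → dist (p (2 * Nat.pair t (k + 1) + b)) (p t) < 1 / (k + 1) := by
    intro b t k hb
    have hk := Nat.right_le_pair t (k + 1)
    have ht := Nat.left_le_pair t (k + 1)
    have htg : tg (2 * Nat.pair t (k + 1) + b) = t := by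
      simp only [tg, show (2 * Nat.pair t (k + 1) + b) / 2 = Nat.pair t (k + 1) by omega,
        Nat.unpair_pair]
    refine ((hp _).2 ⟨t, by omega⟩ htg.symm).trans_le ?_
    gcongr
    omega
  have hdense : ∀ b, b < 2 → range p ⊆ closure (range fun k => p (2 * k + b)) := by
    rintro b hb _ ⟨t, rfl⟩
    refine Metric.mem_closure_iff.2 fun ε hε => ?_
    obtain ⟨k, hk⟩ := exists_nat_one_div_lt hε
    exact ⟨_, ⟨Nat.pair t (k + 1), rfl⟩, by rw [dist_comm]; exact (hnear b t k hb).trans hk⟩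
  exact ⟨p, fun m n hmn => (hp n).1 ⟨m, hmn⟩, hdense 0 (by norm_num), hdense 1 (by norm_num)⟩

theorem exists_mem_forall_notMem_of_interior_eq_empty [CompleteSpace Y] {ι : Type*}
    {A : ι → Set Y} (hA : ∀ i, IsFsigma (A i)) (h : ∀ i, interior (A i) = ∅) (I : Finset ι)
    {U : Set Y} (hU : IsOpen U) (hne : U.Nonempty) : ∃ q ∈ U, ∀ i ∈ I, q ∉ A i := by
  by_contra! hcov
  obtain ⟨i, V, hV, hVne, hVA⟩ := isClosed_univ.exists_isOpen_inter_subset_of_isFsigma hU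
    (by simpa using hne) (S := fun i : I => A i) (fun i => hA i)
    (fun q ⟨hqU, _⟩ => let ⟨i, hi, hq⟩ := hcov q hqU; mem_iUnion.2 ⟨⟨i, hi⟩, hq⟩)
  rw [inter_univ] at hVne hVA
  exact (hVne.mono (interior_maximal hVA hV)).ne_empty (h i)

/-- Compare Kuratowski's theorem on partitions of a complete metric space into meagre sets. -/
theorem exists_nonempty_interior_of_pairwise_disjoint [CompleteSpace Y] [Nonempty Y] {ι : Type*}
    {A : ι → Set Y} (hdisj : Pairwise (Disjoint on A)) (hA : ∀ J : Set ι, IsFsigma (⋃ i ∈ J, A i))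
    (hcover : ⋃ i, A i = univ) : ∃ i, (interior (A i)).Nonempty := by
  classical
  by_contra! h
  choose idx hidx using fun y => mem_iUnion.1 (hcover.symm ▸ mem_univ y : y ∈ ⋃ i, A i)
  have hidx_eq : ∀ y i, y ∈ A i → i = idx y := fun y i hy =>
    by_contra fun hne => disjoint_left.1 (hdisj hne) hy (hidx y)
  obtain ⟨p, hpR, heven, hodd⟩ := exists_seq_rel_and_subset_closure_even_odd
    (R := fun x q => q ∉ A (idx x)) fun s U hU hne =>
      let ⟨q, hqU, hq⟩ := exists_mem_forall_notMem_of_interior_eq_empty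
        (fun i => by simpa using hA {i}) h (s.image idx) hU hne
      ⟨q, hqU, fun x hx => hq _ (Finset.mem_image_of_mem idx hx)⟩
  have hinj : ∀ m n, idx (p m) = idx (p n) → m = n := by
    intro m n hmn
    by_contra hne
    rcases lt_or_gt_of_ne hne with hlt | hlt
    · exact hpR m n hlt (hmn ▸ hidx (p n))
    · exact hpR n m hlt (hmn ▸ hidx (p m))
  -- colour the indices of the sequence by parity: both colours are dense in `closure (range p)`
  set J := range fun k => idx (p (2 * k))
  have hJ : ∀ n, idx (p n) ∈ J ↔ Even n := fun n =>
    ⟨fun ⟨k, hk⟩ => ⟨k, by rw [← hinj _ _ hk]; ring⟩,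
      fun ⟨k, hk⟩ => ⟨k, show idx (p (2 * k)) = _ by rw [hk, two_mul]⟩⟩
  have hcolour : ∀ n (J' : Set ι), p n ∈ ⋃ i ∈ J', A i ↔ idx (p n) ∈ J' := fun n J' => by
    simp only [mem_iUnion₂]
    exact ⟨fun ⟨i, hi, hn⟩ => hidx_eq _ _ hn ▸ hi, fun hn => ⟨_, hn, hidx _⟩⟩
  refine isClosed_closure.not_subset_union_of_subset_closure_diff (range_nonempty p).closure
    (hA J) (hA Jᶜ) ?_ ?_ ?_
  · refine (closure_minimal hodd isClosed_closure).trans (closure_mono ?_)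
    rintro _ ⟨k, rfl⟩
    exact ⟨subset_closure (mem_range_self _), by
      rw [hcolour, hJ]; exact Nat.not_even_two_mul_add_one k⟩
  · refine (closure_minimal heven isClosed_closure).trans (closure_mono ?_)
    rintro _ ⟨k, rfl⟩
    exact ⟨subset_closure (mem_range_self _), by
      rw [hcolour, mem_compl_iff, hJ, not_not]; exact even_two_mul k⟩
  · intro y _
    by_cases hy : idx y ∈ J
    · exact Or.inl (mem_biUnion hy (hidx y))
    · exact Or.inr (mem_biUnion hy (hidx y))

end Kuratowski

section SigmaDisjoint

variable {X : Type*} [MetricSpace X]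

/-- A. H. Stone's σ-disjoint refinement. -/
theorem exists_open_cover_pairwise_disjoint {δ : ℝ} (hδ : 0 < δ) :
    ∃ V : ℕ → X → Set X, (∀ n γ, IsOpen (V n γ)) ∧ (∀ n γ, V n γ ⊆ ball γ δ) ∧
      (∀ n, Pairwise (Disjoint on V n)) ∧ ⋃ n, ⋃ γ, V n γ = univ := by
  obtain ⟨_, _⟩ := exists_wellFoundedLT X
  set ρ : ℕ → ℝ := fun n => 1 / (n + 1)
  have hρ : ∀ n, 0 < ρ n := fun n => by positivity
  -- `V n γ` is spread around points `x` whose first `δ`-close centre is `γ`, well inside `ball γ δ`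
  set V : ℕ → X → Set X := fun n γ =>
    ⋃ x ∈ {x | (∀ γ' < γ, δ ≤ dist x γ') ∧ dist x γ + 3 * ρ n < δ}, ball x (ρ n)
  have hsub : ∀ n γ, V n γ ⊆ ball γ δ := by
    intro n γ y hy
    obtain ⟨x, ⟨-, hx⟩, hyx⟩ := mem_iUnion₂.1 hy
    have := hρ n
    have := dist_triangle y x γ
    rw [mem_ball] at hyx ⊢
    linarith
  have hdisj : ∀ n γ γ', γ < γ' → Disjoint (V n γ) (V n γ') := by
    refine fun n γ γ' hlt => disjoint_left.2 fun y hy hy' => ?_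
    obtain ⟨x, ⟨-, hx⟩, hyx⟩ := mem_iUnion₂.1 hy
    obtain ⟨x', ⟨hx', -⟩, hyx'⟩ := mem_iUnion₂.1 hy'
    have := hx' γ hlt
    have := hρ n
    have := dist_triangle4 x' y x γ
    rw [mem_ball] at hyx hyx'
    rw [dist_comm] at hyx'
    linarith
  refine ⟨V, fun n γ => isOpen_biUnion fun _ _ => isOpen_ball, hsub,
    fun n γ γ' hne => ?_, eq_univ_of_forall fun x => ?_⟩
  · rcases lt_or_gt_of_ne hne with hlt | hlt
    exacts [hdisj n γ γ' hlt, (hdisj n γ' γ hlt).symm]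
  obtain ⟨γ, ⟨hxγ, hfirst⟩, -⟩ :=
    existsUnique_mem_diff_iUnion_lt (O := fun γ => ball γ δ) ⟨x, mem_ball_self hδ⟩
  rw [mem_ball] at hxγ
  obtain ⟨n, hn⟩ : ∃ n, ρ n < (δ - dist x γ) / 3 := exists_nat_one_div_lt (by linarith)
  simp only [V, mem_iUnion]
  refine ⟨n, γ, x, ⟨fun γ' hγ' => ?_, by linarith⟩, mem_ball_self (hρ n)⟩
  exact not_lt.1 fun h => hfirst (mem_biUnion hγ' (mem_ball.2 h))

variable [CompleteSpace X]

theorem IsClosed.exists_isOpen_inter_subset_of_pairwise_disjoint {F : Set X} (hF : IsClosed F)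
    (hne : F.Nonempty) {ι : Type*} {A : ℕ → ι → Set X} (hdisj : ∀ n, Pairwise (Disjoint on A n))
    (hA : ∀ n (J : Set ι), IsFsigma (⋃ i ∈ J, A n i)) (hcover : F ⊆ ⋃ n, ⋃ i, A n i) :
    ∃ n i O, IsOpen O ∧ (O ∩ F).Nonempty ∧ O ∩ F ⊆ A n i := by
  choose K hK hKA using fun n => hA n univ
  simp only [mem_univ, iUnion_true] at hKA
  obtain ⟨⟨n, k⟩, O₀, hO₀, hO₀F, hO₀K⟩ := hF.exists_isOpen_inter_subset isOpen_univ
    (by rwa [univ_inter]) (K := fun nk : ℕ × ℕ => K nk.1 nk.2) (fun _ => hK _ _)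
    (by simpa only [univ_inter, hKA, iUnion_prod'] using hcover)
  -- inside the closed set `Cl` only the single disjoint family `A n` is needed
  set Cl := closure (O₀ ∩ F)
  have : CompleteSpace Cl := isClosed_closure.completeSpace_coe
  have : Nonempty Cl := (hO₀F.mono subset_closure).to_subtype
  obtain ⟨i, w, hw⟩ := exists_nonempty_interior_of_pairwise_disjoint
    (A := fun i => ((↑) : Cl → X) ⁻¹' A n i) (fun i j hij => (hdisj n hij).preimage _)
    (fun J => by simpa only [preimage_iUnion₂] using (hA n J).preimage continuous_subtype_val)
    (by
      rw [← preimage_iUnion, hKA n, eq_univ_iff_forall]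
      exact fun z => mem_iUnion.2 ⟨k, closure_minimal hO₀K (hK n k) z.2⟩)
  obtain ⟨W, hWA, hW, hwW⟩ := mem_interior.1 hw
  obtain ⟨O₁, hO₁, rfl⟩ := isOpen_induced_iff.1 hW
  refine ⟨n, i, O₀ ∩ O₁, hO₀.inter hO₁, ?_, ?_⟩
  · obtain ⟨z, hzO₁, hzO₀, hzF⟩ := mem_closure_iff.1 w.2 O₁ hO₁ hwW
    exact ⟨z, ⟨hzO₀, hzO₁⟩, hzF⟩
  · rintro z ⟨⟨hzO₀, hzO₁⟩, hzF⟩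
    exact hWA (show (⟨z, subset_closure ⟨hzO₀, hzF⟩⟩ : Cl) ∈ _ from hzO₁)

end SigmaDisjoint

section Separation

variable {X : Type*} [MetricSpace X]

def FsigmaSeparated (S T : Set X) : Prop :=
  ∃ M, IsFsigma M ∧ S ⊆ M ∧ Disjoint M T

theorem FsigmaSeparated.mono {S S' T : Set X} (h : FsigmaSeparated S T) (hS : S' ⊆ S) :
    FsigmaSeparated S' T :=
  let ⟨M, hM, hSM, hMT⟩ := h
  ⟨M, hM, hS.trans hSM, hMT⟩

theorem FsigmaSeparated.union {S S' T : Set X} (h : FsigmaSeparated S T)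
    (h' : FsigmaSeparated S' T) : FsigmaSeparated (S ∪ S') T :=
  let ⟨M, hM, hSM, hMT⟩ := h
  let ⟨M', hM', hSM', hMT'⟩ := h'
  ⟨M ∪ M', hM.union hM', union_subset_union hSM hSM', disjoint_union_left.2 ⟨hMT, hMT'⟩⟩

theorem FsigmaSeparated.iUnion {ι : Type*} [Countable ι] {S : ι → Set X} {T : Set X}
    (h : ∀ i, FsigmaSeparated (S i) T) : FsigmaSeparated (⋃ i, S i) T := by
  choose M hM hSM hMT using h
  exact ⟨⋃ i, M i, .iUnion hM, iUnion_mono hSM, disjoint_iUnion_left.2 hMT⟩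

theorem fsigmaSeparated_iUnion_inter {ι : Type*} {O : ι → Set X} (hO : ∀ i, IsOpen (O i))
    {A T : Set X} (h : ∀ i, FsigmaSeparated (O i ∩ A) T) :
    FsigmaSeparated ((⋃ i, O i) ∩ A) T := by
  obtain ⟨_, _⟩ := exists_wellFoundedLT ι
  choose M hM hAM hMT using h
  choose K hK hKM using hM
  refine ⟨⋃ k, ⋃ i, K i k ∩ (O i \ ⋃ j < i, O j),
    .iUnion fun k => isFsigma_iUnion_inter_diff_iUnion_lt (fun i => hK i k) hO, ?_, ?_⟩
  · rintro z ⟨hz, hzA⟩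
    obtain ⟨i, ⟨hzi, hz'⟩, -⟩ := existsUnique_mem_diff_iUnion_lt (mem_iUnion.1 hz)
    obtain ⟨k, hk⟩ := mem_iUnion.1 (hKM i ▸ hAM i ⟨hzi, hzA⟩)
    exact mem_iUnion.2 ⟨k, mem_iUnion.2 ⟨i, hk, hzi, hz'⟩⟩
  · refine disjoint_left.2 fun z hz hzT => ?_
    obtain ⟨k, i, hzK, -⟩ := mem_iUnion₂.1 hz
    exact disjoint_left.1 (hMT i) (hKM i ▸ mem_iUnion.2 ⟨k, hzK⟩) hzT

theorem fsigmaSeparated_of_forall_isClosed {A T : Set X}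
    (h : ∀ F, IsClosed F → F.Nonempty →
      ∃ O, IsOpen O ∧ (O ∩ F).Nonempty ∧ FsigmaSeparated (O ∩ F ∩ A) T) :
    FsigmaSeparated A T := by
  set W := ⋃ O : {O : Set X // IsOpen O ∧ FsigmaSeparated (O ∩ A) T}, O.1
  have hW : FsigmaSeparated (W ∩ A) T :=
    fsigmaSeparated_iUnion_inter (fun O => O.2.1) fun O => O.2.2
  obtain hWF | hWF := Wᶜ.eq_empty_or_nonempty
  · rw [compl_empty_iff] at hWF
    simpa [hWF] using hW
  -- otherwise an open set meeting `Wᶜ` would have been one of those making up `W`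
  obtain ⟨O, hO, ⟨z, hzO, hzW⟩, hOA⟩ :=
    h Wᶜ (isOpen_iUnion fun O => O.2.1).isClosed_compl hWF
  have hOA' : FsigmaSeparated (O ∩ A) T := (hW.union hOA).mono fun y ⟨hyO, hyA⟩ => by
    by_cases hy : y ∈ W
    exacts [Or.inl ⟨hy, hyA⟩, Or.inr ⟨⟨hyO, hy⟩, hyA⟩]
  exact (hzW (mem_iUnion.2 ⟨⟨O, hO, hOA'⟩, hzO⟩)).elim

end Separation

section GδOfRetraction

variable {X : Type*} [MetricSpace X] [CompleteSpace X] {E : Set X}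

theorem LebesgueClassOne.exists_isOpen_fsigmaSeparated {r : X → E} (hr : LebesgueClassOne r)
    (hfix : ∀ x : E, r x = x) {ε : ℝ} (hε : 0 < ε) {F : Set X} (hF : IsClosed F)
    (hne : F.Nonempty) :
    ∃ O, IsOpen O ∧ (O ∩ F).Nonempty ∧ FsigmaSeparated (O ∩ F ∩ {z | ε ≤ dist z (r z)}) E := by
  obtain ⟨V, hVo, hVball, hVdisj, hVcover⟩ := exists_open_cover_pairwise_disjoint (X := E)
    (half_pos hε)
  obtain ⟨n, γ, O, hO, hOF, hOV⟩ := hF.exists_isOpen_inter_subset_of_pairwise_disjoint hne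
    (A := fun n γ => r ⁻¹' V n γ) (fun n i j hij => (hVdisj n hij).preimage r)
    (fun n J => by
      simpa only [preimage_iUnion₂] using hr _ (isOpen_biUnion fun γ _ => hVo n γ))
    (by simp only [← preimage_iUnion, hVcover, preimage_univ, subset_univ])
  -- `r` maps `O ∩ F` into `V n γ ⊆ ball γ (ε / 2)`, while `r` fixes the points of `E`
  refine ⟨O, hO, hOF, r ⁻¹' V n γ ∩ {z | ε / 2 ≤ dist z γ},
    (hr _ (hVo n γ)).inter (isClosed_le continuous_const (by fun_prop)).isFsigma, ?_, ?_⟩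
  · rintro z ⟨hzOF, hzT⟩
    have hrz : dist (r z : X) γ < ε / 2 := hVball n γ (hOV hzOF)
    have := dist_triangle_right z (r z) γ
    exact ⟨hOV hzOF, show ε / 2 ≤ dist z γ by linarith [show ε ≤ dist z (r z) from hzT]⟩
  · refine disjoint_left.2 fun z ⟨hzV, hzγ⟩ hzE => ?_
    have hz : dist z γ < ε / 2 := by
      simpa [hfix ⟨z, hzE⟩, Subtype.dist_eq] using hVball n γ hzV
    exact (not_le.2 hz) hzγ

theorem IsH1Retract.isGδ (h : IsH1Retract E) : IsGδ E := by
  obtain ⟨r, hfix, hr⟩ := h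
  obtain ⟨M, hM, hEM, hME⟩ := FsigmaSeparated.iUnion fun m : ℕ =>
    fsigmaSeparated_of_forall_isClosed fun F hF hne =>
      hr.exists_isOpen_fsigmaSeparated hfix (ε := 1 / (m + 1)) (by positivity) hF hne
  have hEc : Eᶜ = M := by
    refine subset_antisymm (fun z hz => hEM ?_) fun z hz hzE => disjoint_left.1 hME hz hzE
    have : 0 < dist z (r z) := dist_pos.2 fun h => hz (h ▸ (r z).2)
    obtain ⟨m, hm⟩ := exists_nat_one_div_lt this
    exact mem_iUnion.2 ⟨m, hm.le⟩
  rw [← compl_compl E, ← isFsigma_iff_isGδ_compl, hEc]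
  exact hM

end GδOfRetraction

/-- In a completely metrizable space, a nonempty set is an H₁-retract iff it is Gδ. -/
theorem isH1Retract_iff_isGδ {X : Type*} [TopologicalSpace X]
    (hX : CompletelyMetrizable X) (E : Set X) (hne : E.Nonempty) :
    IsH1Retract E ↔ IsGδ E := by
  obtain ⟨m, rfl, hc⟩ := hX
  exact ⟨fun h => h.isGδ, fun h => h.isH1Retract hne⟩
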